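/- Let k be a field of characteristic ≠ 2. Let R = k[x₁,y₁,x₂,y₂,x₃,y₃]/(yᵢ² − xᵢ(xᵢ²−1), i = 1,2,3), an integral domain, let K = Frac(R), and assume the images of all xᵢ, yᵢ are nonzero in K. Set b₂ = x₂/x₁, b₃ = x₃/x₁, a₂ = y₂/y₁, a₃ = y₃/y₁. Then a₂ does not lie in the subfield k(a₃, b₂, b₃) of K generated over k by a₃, b₂, b₃; consequently, since a₂² = (a₃²·b₂·(1−b₂²) + b₂·b₃·(b₂²−b₃²))/(b₃·(1−b₃²)) ∈ k(a₃,b₂,b₃), the field extension k(a₃,b₂,b₃) ⊆ k(a₂,a₃,b₂,b₃) has degree exactly 2. -/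

import Mathlib

/-!
The automorphism of `k(Z)` induced by `y₂ ↦ -y₂` fixes `x₁, y₁, x₂, x₃, y₃`, hence fixes the
field `k(a₃, b₂, b₃)` pointwise, while it sends `a₂ = y₂/y₁` to `-a₂ ≠ a₂` (characteristic `≠ 2`).
So `a₂ ∉ k(a₃, b₂, b₃)`. The curve equations give `a₂²` as an explicit element of
`k(a₃, b₂, b₃)`, so `X² - a₂²` is the minimal polynomial of `a₂` and the extension has degree `2`.
-/

open MvPolynomial

noncomputable section

/-- The ideal of `k[x₁,y₁,x₂,y₂,x₃,y₃]` generated by the three relations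
`yᵢ² - xᵢ(xᵢ² - 1)`, `i = 1,2,3`.  Variables are indexed so that
`x₁ = X 0`, `y₁ = X 1`, `x₂ = X 2`, `y₂ = X 3`, `x₃ = X 4`, `y₃ = X 5`. -/
def uenoIdeal (k : Type*) [Field k] : Ideal (MvPolynomial (Fin 6) k) :=
  Ideal.span { X 1 ^ 2 - X 0 * (X 0 ^ 2 - 1),
               X 3 ^ 2 - X 2 * (X 2 ^ 2 - 1),
               X 5 ^ 2 - X 4 * (X 4 ^ 2 - 1) }

variable (k : Type*) [Field k] [(uenoIdeal k).IsPrime]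

/-- `R = k[x₁,y₁,x₂,y₂,x₃,y₃]/(yᵢ² - xᵢ(xᵢ² - 1), i = 1,2,3)`, the affine coordinate ring of
`Z = C₁ × C₂ × C₃`; it is an integral domain (the defining ideal being prime). -/
abbrev UenoRing : Type _ := MvPolynomial (Fin 6) k ⧸ uenoIdeal k

/-- `K = Frac(R) = k(Z)`, the function field of `Z = C₁ × C₂ × C₃`. -/
abbrev UenoField : Type _ := FractionRing (UenoRing k)

/-- The image in `K = Frac(R)` of the `i`-th variable. -/
def xv (i : Fin 6) : UenoField k :=
  algebraMap (UenoRing k) (UenoField k) (Ideal.Quotient.mk (uenoIdeal k) (X i))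

/-- `x₁` as an element of `K`. -/ def x1 : UenoField k := xv k 0
/-- `y₁` as an element of `K`. -/ def y1 : UenoField k := xv k 1
/-- `x₂` as an element of `K`. -/ def x2 : UenoField k := xv k 2
/-- `y₂` as an element of `K`. -/ def y2 : UenoField k := xv k 3
/-- `x₃` as an element of `K`. -/ def x3 : UenoField k := xv k 4
/-- `y₃` as an element of `K`. -/ def y3 : UenoField k := xv k 5

/-- `b₂ = x₂/x₁`. -/ def b2 : UenoField k := x2 k / x1 k
/-- `b₃ = x₃/x₁`. -/ def b3 : UenoField k := x3 k / x1 k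
/-- `a₂ = y₂/y₁`. -/ def a2 : UenoField k := y2 k / y1 k
/-- `a₃ = y₃/y₁`. -/ def a3 : UenoField k := y3 k / y1 k

/-- The subfield `k(a₃, b₂, b₃)` of `K = k(Z)`. -/
def L1 : IntermediateField k (UenoField k) :=
  IntermediateField.adjoin k ({a3 k, b2 k, b3 k} : Set (UenoField k))

namespace IntermediateField

variable {F E : Type*} [Field F] [Field E] [Algebra F E]

theorem finrank_adjoin_simple_eq_two {L : IntermediateField F E} {x : E}
    (hx : x ∉ L) (hsq : x ^ 2 ∈ L) : Module.finrank L L⟮x⟯ = 2 := by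
  set c : L := ⟨x ^ 2, hsq⟩
  have hmonic : (Polynomial.X ^ 2 - Polynomial.C c).Monic :=
    Polynomial.monic_X_pow_sub_C c two_ne_zero
  have hroot : Polynomial.aeval x (Polynomial.X ^ 2 - Polynomial.C c) = 0 := by
    simp [c]
  have hint : IsIntegral L x := ⟨_, hmonic, hroot⟩
  have hle : (minpoly L x).natDegree ≤ 2 := by
    simpa using Polynomial.natDegree_le_natDegree (minpoly.min L x hmonic hroot)
  have hge : 2 ≤ (minpoly L x).natDegree := by
    rw [minpoly.two_le_natDegree_iff hint]
    rintro ⟨b, rfl⟩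
    exact hx b.2
  rw [adjoin.finrank hint]
  omega

theorem notMem_adjoin_of_map_eq_neg (σ : E →ₐ[F] E) {s : Set E} (hs : ∀ y ∈ s, σ y = y)
    {x : E} (hx : σ x = -x) (hx0 : x ≠ 0) (h2 : (2 : E) ≠ 0) :
    x ∉ adjoin F s := by
  intro hmem
  have hfix : σ.comp (adjoin F s).val = (adjoin F s).val :=
    adjoin_algHom_ext F fun y hy => hs y hy
  have hσx : σ x = x := DFunLike.congr_fun hfix ⟨x, hmem⟩
  have : 2 * x = 0 := by linear_combination hx - hσx
  exact (mul_ne_zero h2 hx0) this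

end IntermediateField

theorem div_sq_eq_of_curves {K : Type*} [Field K] {x₁ y₁ x₂ y₂ x₃ y₃ : K}
    (h₁ : y₁ ^ 2 = x₁ * (x₁ ^ 2 - 1)) (h₂ : y₂ ^ 2 = x₂ * (x₂ ^ 2 - 1))
    (h₃ : y₃ ^ 2 = x₃ * (x₃ ^ 2 - 1)) (hx₁ : x₁ ≠ 0) (hx₃ : x₃ ≠ 0) (hy₁ : y₁ ≠ 0)
    (h₁₃ : x₁ ^ 2 - x₃ ^ 2 ≠ 0) :
    (y₂ / y₁) ^ 2 =
      ((y₃ / y₁) ^ 2 * (x₂ / x₁) * (1 - (x₂ / x₁) ^ 2) +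
          (x₂ / x₁) * (x₃ / x₁) * ((x₂ / x₁) ^ 2 - (x₃ / x₁) ^ 2)) /
        ((x₃ / x₁) * (1 - (x₃ / x₁) ^ 2)) := by
  have hc₁ : x₁ ^ 2 - 1 ≠ 0 := by
    rintro h
    simp [h, hy₁] at h₁
  rw [div_pow, div_pow, h₁, h₂, h₃]
  field_simp
  ring

namespace MvPolynomial

variable {R ι : Type*} [CommRing R] [DecidableEq ι]

noncomputable def negVar (i : ι) : MvPolynomial ι R →ₐ[R] MvPolynomial ι R :=
  aeval (Function.update X i (-X i))

theorem negVar_X (i j : ι) :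
    negVar i (X j : MvPolynomial ι R) = if j = i then -X j else X j := by
  rcases eq_or_ne j i with rfl | h <;> simp [negVar, *]

theorem negVar_comp_negVar (i : ι) :
    (negVar i).comp (negVar i) = AlgHom.id R (MvPolynomial ι R) := by
  ext j
  rcases eq_or_ne j i with rfl | h <;> simp [negVar_X, *]

noncomputable def negVarEquiv (i : ι) : MvPolynomial ι R ≃ₐ[R] MvPolynomial ι R :=
  AlgEquiv.ofAlgHom (negVar i) (negVar i) (negVar_comp_negVar i) (negVar_comp_negVar i)

@[simp]
theorem negVarEquiv_apply (i : ι) (p : MvPolynomial ι R) : negVarEquiv i p = negVar i p := rfl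

end MvPolynomial

theorem map_negVarEquiv_uenoIdeal (F : Type*) [Field F] :
    (uenoIdeal F).map (negVarEquiv 3 : MvPolynomial (Fin 6) F ≃ₐ[F] _) = uenoIdeal F := by
  rw [uenoIdeal, Ideal.map_span]
  congr 1
  apply Set.EqOn.image_eq_self
  rintro p (rfl | rfl | rfl) <;> simp [negVar_X]

theorem uenoIdeal_le_ker_eval {F : Type*} [Field F] {p : Fin 6 → F}
    (h₁ : p 1 ^ 2 = p 0 * (p 0 ^ 2 - 1)) (h₂ : p 3 ^ 2 = p 2 * (p 2 ^ 2 - 1))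
    (h₃ : p 5 ^ 2 = p 4 * (p 4 ^ 2 - 1)) : uenoIdeal F ≤ RingHom.ker (eval p) := by
  rw [uenoIdeal, Ideal.span_le]
  rintro q (rfl | rfl | rfl) <;> simp [*]

theorem aeval_xv (k : Type*) [Field k] (p : MvPolynomial (Fin 6) k) :
    aeval (xv k) p = algebraMap (UenoRing k) (UenoField k) (Ideal.Quotient.mk _ p) := by
  change aeval (xv k) p =
    (IsScalarTower.toAlgHom k (UenoRing k) (UenoField k)).comp (Ideal.Quotient.mkₐ k _) p
  congr 1
  ext i
  simp [xv]

theorem aeval_xv_eq_zero_iff (k : Type*) [Field k] {p : MvPolynomial (Fin 6) k} :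
    aeval (xv k) p = 0 ↔ p ∈ uenoIdeal k := by
  rw [aeval_xv, IsFractionRing.to_map_eq_zero_iff, Ideal.Quotient.eq_zero_iff_mem]

theorem curve_equations (k : Type*) [Field k] :
    y1 k ^ 2 = x1 k * (x1 k ^ 2 - 1) ∧ y2 k ^ 2 = x2 k * (x2 k ^ 2 - 1) ∧
      y3 k ^ 2 = x3 k * (x3 k ^ 2 - 1) := by
  have h : ∀ p ∈ ({X 1 ^ 2 - X 0 * (X 0 ^ 2 - 1), X 3 ^ 2 - X 2 * (X 2 ^ 2 - 1),
      X 5 ^ 2 - X 4 * (X 4 ^ 2 - 1)} : Set (MvPolynomial (Fin 6) k)), aeval (xv k) p = 0 :=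
    fun p hp => (aeval_xv_eq_zero_iff k).2 (Ideal.subset_span hp)
  simpa [sub_eq_zero, x1, y1, x2, y2, x3, y3] using h

theorem x1_sq_sub_x3_sq_ne_zero (k : Type*) [Field k] : x1 k ^ 2 - x3 k ^ 2 ≠ 0 := by
  have hZ : uenoIdeal k ≤ RingHom.ker (eval (Pi.single 4 1)) :=
    uenoIdeal_le_ker_eval (by simp) (by simp) (by simp)
  intro h
  have hmem : (X 0 ^ 2 - X 4 ^ 2 : MvPolynomial (Fin 6) k) ∈ uenoIdeal k := by
    rw [← aeval_xv_eq_zero_iff]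
    simpa [x1, x3] using h
  simpa using hZ hmem

def flipY₂ (k : Type*) [Field k] : UenoField k ≃ₐ[k] UenoField k :=
  IsFractionRing.algEquivOfAlgEquiv
    (Ideal.quotientEquivAlg _ _ (negVarEquiv 3) (map_negVarEquiv_uenoIdeal k).symm)

theorem flipY₂_xv (k : Type*) [Field k] (i : Fin 6) :
    flipY₂ k (xv k i) = if i = 3 then -xv k i else xv k i := by
  rw [xv, flipY₂, IsFractionRing.algEquivOfAlgEquiv_algebraMap]
  change algebraMap _ _ (Ideal.Quotient.mk _ (negVar 3 (X i))) = _
  rw [negVar_X]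
  split_ifs <;> simp

theorem a2_notMem_L1 (h2 : (2 : k) ≠ 0) (hne : ∀ i : Fin 6, xv k i ≠ 0) : a2 k ∉ L1 k := by
  refine IntermediateField.notMem_adjoin_of_map_eq_neg (flipY₂ k).toAlgHom ?_ ?_ ?_ ?_
  · rintro y (rfl | rfl | rfl) <;>
      simp [a3, b2, b3, x1, y1, x2, x3, y3, map_div₀, flipY₂_xv]
  · simp [a2, y1, y2, map_div₀, flipY₂_xv, neg_div]
  · exact div_ne_zero (hne 3) (hne 1)
  · rw [← map_ofNat (algebraMap k (UenoField k)) 2]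
    exact (map_ne_zero _).2 h2

theorem a2_sq_eq (hne : ∀ i : Fin 6, xv k i ≠ 0) :
    a2 k ^ 2 =
      (a3 k ^ 2 * b2 k * (1 - b2 k ^ 2) + b2 k * b3 k * (b2 k ^ 2 - b3 k ^ 2)) /
        (b3 k * (1 - b3 k ^ 2)) :=
  have ⟨h₁, h₂, h₃⟩ := curve_equations k
  div_sq_eq_of_curves h₁ h₂ h₃ (hne 0) (hne 4) (hne 1) (x1_sq_sub_x3_sq_ne_zero k)

theorem a2_sq_mem_L1 (hne : ∀ i : Fin 6, xv k i ≠ 0) : a2 k ^ 2 ∈ L1 k := by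
  have ha3 : a3 k ∈ L1 k := IntermediateField.subset_adjoin k _ (by simp)
  have hb2 : b2 k ∈ L1 k := IntermediateField.subset_adjoin k _ (by simp)
  have hb3 : b3 k ∈ L1 k := IntermediateField.subset_adjoin k _ (by simp)
  rw [a2_sq_eq k hne]
  exact div_mem
    (add_mem (mul_mem (mul_mem (pow_mem ha3 2) hb2) (sub_mem (one_mem _) (pow_mem hb2 2)))
      (mul_mem (mul_mem hb2 hb3) (sub_mem (pow_mem hb2 2) (pow_mem hb3 2))))
    (mul_mem hb3 (sub_mem (one_mem _) (pow_mem hb3 2)))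

set_option synthInstance.maxHeartbeats 1000000 in
/-- **Key step of Proposition 2.5**: `a₂ ∉ k(a₃, b₂, b₃)`, while
`a₂² = (a₃²b₂(1-b₂²) + b₂b₃(b₂²-b₃²))/(b₃(1-b₃²)) ∈ k(a₃, b₂, b₃)`; consequently the
extension `k(a₃, b₂, b₃) ⊆ k(a₂, a₃, b₂, b₃)` has degree exactly `2`. -/
theorem a2_not_mem_and_degree_two (h2 : (2 : k) ≠ 0)
    (hne : ∀ i : Fin 6, xv k i ≠ 0) :
    a2 k ∉ L1 k ∧
    a2 k ^ 2 =
      (a3 k ^ 2 * b2 k * (1 - b2 k ^ 2) + b2 k * b3 k * (b2 k ^ 2 - b3 k ^ 2)) /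
        (b3 k * (1 - b3 k ^ 2)) ∧
    a2 k ^ 2 ∈ L1 k ∧
    (IntermediateField.adjoin (L1 k) ({a2 k} : Set (UenoField k))).restrictScalars k =
      IntermediateField.adjoin k ({a2 k, a3 k, b2 k, b3 k} : Set (UenoField k)) ∧
    Module.finrank (L1 k)
      (IntermediateField.adjoin (L1 k) ({a2 k} : Set (UenoField k))) = 2 := by
  have hnotMem := a2_notMem_L1 k h2 hne
  have hsq := a2_sq_mem_L1 k hne
  refine ⟨hnotMem, a2_sq_eq k hne, hsq, ?_,
    IntermediateField.finrank_adjoin_simple_eq_two hnotMem hsq⟩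
  rw [L1, IntermediateField.adjoin_adjoin_left, Set.union_singleton]
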